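/- arXiv:1308.6043 — 2 statements merged into one kernel-verified Lean document; each statement's English description precedes it below -/
import Mathlib

section
/- Let (R, m) be a Noetherian local ring with Ass_R R = {p}, p = Rx ≠ 0 principal, and let n be the positive integer with p^n ≠ 0 and p^{n+1} = 0. Then (0 :_R p) = R x^n. -/
open CategoryTheory

noncomputable section

universe u

/-- The `n`-th Ext module `Ext_R^n(M, N)` of two `R`-modules, as an object of `ModuleCat R`. -/
abbrev ExtMod (R : Type u) [CommRing R] (n : ℕ)
    (M N : Type u) [AddCommGroup M] [Module R M] [AddCommGroup N] [Module R N] :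
    ModuleCat.{u} R :=
  ((Ext R (ModuleCat.{u} R) n).obj (Opposite.op (ModuleCat.of R M))).obj (ModuleCat.of R N)

/-- A commutative ring is a Gorenstein local ring if it is Noetherian, local, and has finite
self-injective dimension; the latter is equivalent to the vanishing of `Ext^i(R/m, R)` for all
large `i`. -/
def IsGorensteinLocalRing (R : Type u) [CommRing R] : Prop :=
  IsNoetherianRing R ∧ IsLocalRing R ∧
    ∃ n : ℕ, ∀ i > n, ∀ I : Ideal R, I.IsMaximal → Subsingleton (ExtMod R i (R ⧸ I) R)

/-- The grade of an ideal: the supremum of lengths of `R`-regular sequences contained in `I`. -/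
noncomputable def idealGrade (R : Type u) [CommRing R] (I : Ideal R) : ℕ∞ :=
  sSup {n : ℕ∞ | ∃ rs : List R, (rs.length : ℕ∞) = n ∧ (∀ r ∈ rs, r ∈ I) ∧
    RingTheory.Sequence.IsRegular R rs}

/-- The height of an ideal: the infimum of the heights of the primes containing it. -/
noncomputable def idealHeight (R : Type u) [CommRing R] (I : Ideal R) : ℕ∞ :=
  ⨅ p ∈ {p : PrimeSpectrum R | I ≤ p.asIdeal}, Order.height p

/-- A regular local ring: Noetherian local whose maximal ideal is generated by `dim R`
elements. -/
def IsRegularLocalRing' (R : Type u) [CommRing R] : Prop :=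
  IsNoetherianRing R ∧ IsLocalRing R ∧
    ∃ s : Finset R, (∀ I : Ideal R, I.IsMaximal → Ideal.span (s : Set R) = I) ∧
      (s.card : WithBot ℕ∞) = ringKrullDim R

/-- A Cohen-Macaulay local ring: Noetherian local with depth (= grade of the maximal ideal)
equal to the Krull dimension. -/
def IsCohenMacaulayLocalRing (R : Type u) [CommRing R] : Prop :=
  IsNoetherianRing R ∧ IsLocalRing R ∧
    ∀ I : Ideal R, I.IsMaximal → (idealGrade R I : WithBot ℕ∞) = ringKrullDim R

theorem stmt4 (R : Type u) [CommRing R] [IsLocalRing R] [IsNoetherianRing R]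
    (p : Ideal R) (x : R) (hass : associatedPrimes R R = {p})
    (hpx : p = Ideal.span {x}) (hp0 : p ≠ ⊥)
    (n : ℕ) (hn : 0 < n) (hpn : p ^ n ≠ ⊥) (hpn1 : p ^ (n + 1) = ⊥) :
    (⊥ : Submodule R R).colon (p : Submodule R R) = Ideal.span {x ^ n} := by
  have hxn1 : x ^ (n + 1) = 0 := by
    have : Ideal.span {x ^ (n+1)} = (⊥ : Ideal R) := by
      rw [← Ideal.span_singleton_pow, ← hpx]; exact hpn1
    simpa [Ideal.span_singleton_eq_bot] using this
  have hxn : x ^ n ≠ 0 := by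
    intro h
    apply hpn
    rw [hpx, Ideal.span_singleton_pow, h, Ideal.span_singleton_eq_bot]
  -- main claim by induction
  have claim : ∀ j : ℕ, j ≤ n → ∀ a : R, a * x ^ (n + 1 - j) = 0 → a ∈ Ideal.span {x ^ j} := by
    intro j
    induction j with
    | zero => intro _ a _; simp [Ideal.mem_span_singleton]
    | succ k ih =>
      intro hk a ha
      have hnk : n + 1 - (k + 1) = n - k := by omega
      rw [hnk] at ha
      have hxnk : x ^ (n - k) ≠ 0 := by
        intro h
        apply hxn
        have : x ^ n = x ^ (n - k) * x ^ k := by rw [← pow_add]; congr 1; omega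
        rw [this, h, zero_mul]
      -- a is a zero divisor, hence in p
      have hazd : a ∈ p := by
        have : a ∈ ⋃ q ∈ associatedPrimes R R, (q : Set R) := by
          rw [biUnion_associatedPrimes_eq_zero_divisors]
          exact ⟨x ^ (n - k), hxnk, by simpa [smul_eq_mul] using ha⟩
        rw [hass] at this
        simpa using this
      obtain ⟨c, rfl⟩ := Ideal.mem_span_singleton'.mp (hpx ▸ hazd)
      have hc : c * x ^ (n + 1 - k) = 0 := by
        have h1 : n + 1 - k = (n - k) + 1 := by omega
        rw [h1, pow_succ]
        calc c * (x ^ (n-k) * x) = (c * x) * x ^ (n - k) := by ring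
        _ = 0 := ha
      obtain ⟨d, rfl⟩ := Ideal.mem_span_singleton'.mp (ih (by omega) c hc)
      exact Ideal.mem_span_singleton'.mpr ⟨d, by rw [pow_succ]; ring⟩
  apply le_antisymm
  · intro a ha
    rw [Submodule.mem_colon] at ha
    have hax : a * x = 0 := by
      have := ha x (hpx ▸ Ideal.mem_span_singleton_self x)
      simpa [smul_eq_mul] using this
    have := claim n le_rfl a (by simpa using hax)
    exact this
  · rw [Ideal.span_le]
    intro y hy
    simp only [Set.mem_singleton_iff] at hy
    subst hy
    rw [SetLike.mem_coe, Submodule.mem_colon]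
    intro y hyp
    obtain ⟨c, rfl⟩ := Ideal.mem_span_singleton'.mp (hpx ▸ hyp)
    have : x ^ n • (c * x) = c * x ^ (n + 1) := by rw [smul_eq_mul, pow_succ]; ring
    rw [this, hxn1, mul_zero]
    exact Submodule.zero_mem _

end
end

section
/- Let (R, m) be a Noetherian local ring with Ass_R R = {p} and p = Rx principal and nonzero, and let n satisfy p^n ≠ 0, p^{n+1} = 0. Then (0 :_R p^n) = p. -/
open CategoryTheory

noncomputable section

universe u

theorem stmt5 (R : Type u) [CommRing R] [IsLocalRing R] [IsNoetherianRing R]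
    (p : Ideal R) (x : R) (hass : associatedPrimes R R = {p})
    (hpx : p = Ideal.span {x}) (hp0 : p ≠ ⊥)
    (n : ℕ) (hn : 0 < n) (hpn : p ^ n ≠ ⊥) (hpn1 : p ^ (n + 1) = ⊥) :
    (⊥ : Submodule R R).colon ((p ^ n : Ideal R) : Submodule R R) = p := by
  have hxn : (x : R) ^ n ≠ 0 := by
    intro h
    apply hpn
    rw [hpx, Ideal.span_singleton_pow, h, Ideal.span_singleton_eq_bot.mpr rfl]
  apply le_antisymm
  · intro r hr
    have hrx : r * x ^ n = 0 := by
      have := Submodule.mem_colon.mp hr (x ^ n) ?_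
      · simpa using this
      · rw [hpx, Ideal.span_singleton_pow]
        exact Ideal.mem_span_singleton_self _
    have hzd : r ∈ ⋃ q ∈ associatedPrimes R R, (q : Set R) := by
      rw [biUnion_associatedPrimes_eq_zero_divisors]
      exact ⟨x ^ n, hxn, by simpa using hrx⟩
    rw [hass] at hzd
    simpa using hzd
  · intro r hr
    rw [Submodule.mem_colon]
    intro y hy
    have : r * y ∈ p ^ (n + 1) := by
      rw [pow_succ']
      exact Ideal.mul_mem_mul hr hy
    rw [hpn1] at this
    simpa using this

end
end
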